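/- For every strict partition γ, every n, every 1 ≤ i < n, and every T ∈ SSHT_n(γ) with f_i*(T) ≠ 0, the weight of f_i*(T) is obtained from the weight of T by decreasing the i-th part by 1 and increasing the (i+1)-st part by 1; all other parts of the weight are unchanged. -/

import Mathlib

/-! ## Strict partitions and shifted diagrams (French convention, 1-indexed).

A marked entry `i'` is encoded as `2*i - 1` and an unmarked entry `i` as `2*i`;
the value `0` denotes an empty cell / a cell outside the diagram.  The total
order `1' < 1 < 2' < 2 < ⋯` then coincides with the usual order on `ℕ`. -/

/-- A strict partition: a strictly decreasing list of positive integers. -/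
def StrictPartition (γ : List ℕ) : Prop :=
  γ.Chain' (· > ·) ∧ ∀ x ∈ γ, 0 < x

/-- The `r`-th part (1-indexed) of a partition given as a list. -/
def part (γ : List ℕ) (r : ℕ) : ℕ := γ.getD (r - 1) 0

/-- The cell `(r, c)` (row `r` indexed from the bottom, column `c`, both 1-indexed)
belongs to the shifted diagram of `γ`: row `r` has `γ_r` cells, with its leftmost
cell on the main diagonal `c = r`. -/
def ShiftedShape (γ : List ℕ) (rc : ℕ × ℕ) : Prop :=
  1 ≤ rc.1 ∧ rc.1 ≤ γ.length ∧ rc.1 ≤ rc.2 ∧ rc.2 < rc.1 + part γ rc.1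

instance (γ : List ℕ) (rc : ℕ × ℕ) : Decidable (ShiftedShape γ rc) := by
  unfold ShiftedShape; infer_instance

/-- A common bound for all row and column indices of cells of the (shifted) diagram. -/
def colBound (γ : List ℕ) : ℕ := γ.length + γ.foldr max 0

/-- The cells of the shifted diagram of `γ`, as a finite set. -/
def shapeCells (γ : List ℕ) : Finset (ℕ × ℕ) :=
  (Finset.range (colBound γ + 1) ×ˢ Finset.range (colBound γ + 1)).filter
    (fun rc => ShiftedShape γ rc)

/-- A semistandard shifted tableau of shape `γ` with entries in
`{1' < 1 < 2' < 2 < ⋯ < n' < n}` (encoded as `{1, 2, …, 2n}`): entries weakly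
increase along rows (eastward) and columns (northward, i.e. increasing row
index), with at most one unmarked `i` per column, at most one marked `i'` per
row, and no marked entries on the main diagonal. -/
structure SSHT (n : ℕ) (γ : List ℕ) where
  entry : ℕ × ℕ → ℕ
  zero_outside : ∀ rc, ¬ ShiftedShape γ rc → entry rc = 0
  pos : ∀ rc, ShiftedShape γ rc → 1 ≤ entry rc
  le_two_n : ∀ rc, ShiftedShape γ rc → entry rc ≤ 2 * n
  row_mono : ∀ r c c', c < c' → ShiftedShape γ (r, c) → ShiftedShape γ (r, c') →
    entry (r, c) ≤ entry (r, c')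
  col_mono : ∀ r r' c, r < r' → ShiftedShape γ (r, c) → ShiftedShape γ (r', c) →
    entry (r, c) ≤ entry (r', c)
  col_unmarked : ∀ r r' c, r < r' → ShiftedShape γ (r, c) → ShiftedShape γ (r', c) →
    entry (r, c) = entry (r', c) → entry (r, c) % 2 = 1
  row_marked : ∀ r c c', c < c' → ShiftedShape γ (r, c) → ShiftedShape γ (r, c') →
    entry (r, c) = entry (r, c') → entry (r, c) % 2 = 0
  diag_unmarked : ∀ r, ShiftedShape γ (r, r) → entry (r, r) % 2 = 0

/-- The weight of a filling of the shifted diagram of `γ`: `wtFun γ f k` is the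
number of cells whose entry equals `k` or `k'` (encoded `2k` or `2k-1`). -/
def wtFun (γ : List ℕ) (f : ℕ × ℕ → ℕ) (k : ℕ) : ℕ :=
  ((shapeCells γ).filter (fun rc => f rc = 2 * k - 1 ∨ f rc = 2 * k)).card

/-! ## The hook reading word and the statistics `m_i`. -/

/-- The cells of `T` listed in hook reading order: for `c` from the maximal
column down to `1`, the cells of marked entries read up the `c`-th column,
followed by the cells of unmarked entries of the `c`-th row read left to
right. -/
def hookCells {n : ℕ} {γ : List ℕ} (T : SSHT n γ) : List (ℕ × ℕ) :=
  ((List.range (colBound γ)).reverse.map (· + 1)).flatMap (fun c =>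
    (((List.range (colBound γ)).map (· + 1)).filter
        (fun r => decide (ShiftedShape γ (r, c)) && decide (T.entry (r, c) % 2 = 1))).map
      (fun r => (r, c))
    ++
    (((List.range (colBound γ)).map (· + 1)).filter
        (fun j => decide (ShiftedShape γ (c, j)) && decide (T.entry (c, j) % 2 = 0))).map
      (fun j => (c, j)))

/-- The value of an encoded entry: both `i'` (encoded `2i-1`) and `i`
(encoded `2i`) have value `i`. -/
def entryValue (e : ℕ) : ℕ := (e + 1) / 2

/-- The hook reading word of a shifted tableau (a word in the values `1, …, n`). -/
def hookWord {n : ℕ} {γ : List ℕ} (T : SSHT n γ) : List ℕ :=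
  (hookCells T).map (fun rc => entryValue (T.entry rc))

/-- `mAt i w r` is `m_i(w, r)`: the number of `i`'s minus the number of
`(i+1)`'s among the first `r` letters of `w`. -/
def mAt (i : ℕ) (w : List ℕ) (r : ℕ) : ℤ :=
  ((w.take r).count i : ℤ) - ((w.take r).count (i + 1) : ℤ)

/-- `mMax i w` is `m_i(w) = max_{1 ≤ r ≤ |w|} m_i(w, r)` (with value `0` for the
empty word). -/
noncomputable def mMax (i : ℕ) (w : List ℕ) : ℤ :=
  WithBot.unbotD 0 (((List.range w.length).map (fun r => mAt i w (r + 1))).maximum)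

/-! ## The shifted lowering operators `f_i*`. -/

/-- The cell lies on the `k`-ribbon of `T`: its entry is `k'` or `k`
(encoded `2k - 1` or `2k`). -/
def inRibbon {n : ℕ} {γ : List ℕ} (T : SSHT n γ) (k : ℕ) (rc : ℕ × ℕ) : Prop :=
  T.entry rc = 2 * k - 1 ∨ T.entry rc = 2 * k

instance {n : ℕ} {γ : List ℕ} (T : SSHT n γ) (k : ℕ) (rc : ℕ × ℕ) :
    Decidable (inRibbon T k rc) := by unfold inRibbon; infer_instance

/-- Walk northwest (north if possible, else west) along the `k`-ribbon of `T`,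
starting from a given cell; returns the northwestern-most cell of the ribbon
containing it. -/
def nwWalk {n : ℕ} {γ : List ℕ} (T : SSHT n γ) (k : ℕ) : ℕ → ℕ × ℕ → ℕ × ℕ
  | 0, rc => rc
  | fuel + 1, (r, c) =>
    if inRibbon T k (r + 1, c) then nwWalk T k fuel (r + 1, c)
    else if inRibbon T k (r, c - 1) then nwWalk T k fuel (r, c - 1)
    else (r, c)

/-- Walk along the `i`-ribbon of `T` away from its starting cell (east if
possible, else south), returning the first cell carrying an unmarked entry `i`
that is not followed (on its east) by `i` or `(i+1)'`. -/
def ribbonTarget {n : ℕ} {γ : List ℕ} (T : SSHT n γ) (i : ℕ) : ℕ → ℕ × ℕ → Option (ℕ × ℕ)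
  | 0, _ => none
  | fuel + 1, (r, c) =>
    if T.entry (r, c) = 2 * i ∧ T.entry (r, c + 1) ≠ 2 * i ∧
        T.entry (r, c + 1) ≠ 2 * i + 1 then some (r, c)
    else if inRibbon T i (r, c + 1) then ribbonTarget T i fuel (r, c + 1)
    else if inRibbon T i (r - 1, c) then ribbonTarget T i fuel (r - 1, c)
    else none

/-- The shifted lowering operator `f_i*`, described on the underlying fillings:
`shiftedLowerFun i T = none` when `f_i*(T) = 0`, and otherwise it returns the
filling of the tableau `f_i*(T)`.  The cases `1(a)-(c)` and `2(a)-(c)` follow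
Definition 3.3 of the paper. -/
noncomputable def shiftedLowerFun {n : ℕ} {γ : List ℕ} (i : ℕ) (T : SSHT n γ) : Option (ℕ × ℕ → ℕ) :=
  if mMax i (hookWord T) ≤ 0 then none
  else
    let w := hookWord T
    let pIdx := (List.range w.length).findIdx (fun r => decide (mAt i w (r + 1) = mMax i w))
    match (hookCells T)[pIdx]? with
    | none => none
    | some (r, c) =>
      let x := T.entry (r, c)
      let y := T.entry (r + 1, c)   -- the entry north of `x`
      let z := T.entry (r, c + 1)   -- the entry east of `x`
      if x = 2 * i then
        -- case 1(a): `z = (i+1)'`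
        if z = 2 * i + 1 then
          some (fun rc => if rc = (r, c) then 2 * i + 1
            else if rc = (r, c + 1) then 2 * i + 2 else T.entry rc)
        -- case 1(b): `y` does not exist or `y > i + 1`
        else if ¬ ShiftedShape γ (r + 1, c) ∨ 2 * i + 2 < y then
          some (fun rc => if rc = (r, c) then 2 * i + 2 else T.entry rc)
        -- case 1(c): unmark the northwestern-most cell of the `(i+1)`-ribbon through `y`
        else
          let q := nwWalk T (i + 1) (2 * colBound γ + 2) (r + 1, c)
          some (fun rc => if rc = (r, c) then 2 * i + 1
            else if rc = q then (if T.entry q % 2 = 1 then T.entry q + 1 else T.entry q)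
            else T.entry rc)
      else
        -- case 2(a): `y = i`
        if y = 2 * i then
          some (fun rc => if rc = (r, c) then 2 * i
            else if rc = (r + 1, c) then 2 * i + 1 else T.entry rc)
        -- case 2(b): `z` does not exist or `z > (i+1)'`
        else if ¬ ShiftedShape γ (r, c + 1) ∨ 2 * i + 1 < z then
          some (fun rc => if rc = (r, c) then 2 * i + 1 else T.entry rc)
        -- case 2(c): change the first unmarked `i` along the `i`-ribbon through `x`
        -- not followed by `i` or `(i+1)'` into `(i+1)'`
        else
          match ribbonTarget T i (2 * colBound γ + 2) (r, c) with
          | none => none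
          | some q => some (fun rc => if rc = (r, c) then 2 * i
              else if rc = q then 2 * i + 1 else T.entry rc)

/-!
Every case of `f_i*` changes the value (forgetting marks) of exactly one cell, from `i` to
`i + 1`: the other cell it may touch either only gains or loses a mark (cases 1(c), 2(a), 2(c))
or already has value `i + 1` (case 1(a)). That the cell it starts from has value `i` comes from
the reading word: `m_i(w, ·)` first reaches its positive maximum at a step where it increases,
that is, at a letter `i`.
-/

section Weight

open Finset

theorem card_filter_shift_of_eq_off {α β : Type*} [DecidableEq α] [DecidableEq β]
    {S : Finset α} {F G : α → β} {p : α} {a b : β} (hp : p ∈ S) (hab : a ≠ b)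
    (hFp : F p = a) (hGp : G p = b) (hoff : ∀ x ∈ S, x ≠ p → G x = F x) :
    #{x ∈ S | G x = a} + 1 = #{x ∈ S | F x = a} ∧
    #{x ∈ S | G x = b} = #{x ∈ S | F x = b} + 1 ∧
    ∀ c, c ≠ a → c ≠ b → #{x ∈ S | G x = c} = #{x ∈ S | F x = c} := by
  have key : ∀ c, #{x ∈ S | G x = c} + (if a = c then 1 else 0) =
      #{x ∈ S | F x = c} + (if b = c then 1 else 0) := fun c => by
    have hrest : ∑ x ∈ S.erase p, (if G x = c then 1 else 0) =
        ∑ x ∈ S.erase p, (if F x = c then 1 else 0) :=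
      sum_congr rfl fun x hx => by rw [hoff x (mem_of_mem_erase hx) (ne_of_mem_erase hx)]
    simp only [card_filter, ← add_sum_erase S _ hp, hFp, hGp, hrest]
    ring
  refine ⟨?_, ?_, fun c hca hcb => ?_⟩
  · simpa [Ne.symm hab] using key a
  · simpa [hab] using key b
  · simpa [Ne.symm hca, Ne.symm hcb] using key c

theorem entryValue_eq_iff {e k : ℕ} : entryValue e = k ↔ e = 2 * k - 1 ∨ e = 2 * k := by
  unfold entryValue
  omega

@[simp]
theorem entryValue_two_mul (i : ℕ) : entryValue (2 * i) = i := by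
  unfold entryValue
  omega

@[simp]
theorem entryValue_two_mul_add_one (i : ℕ) : entryValue (2 * i + 1) = i + 1 := by
  unfold entryValue
  omega

@[simp]
theorem entryValue_two_mul_add_two (i : ℕ) : entryValue (2 * i + 2) = i + 1 := by
  unfold entryValue
  omega

theorem entryValue_succ_of_odd {e : ℕ} (h : e % 2 = 1) : entryValue (e + 1) = entryValue e := by
  unfold entryValue
  omega

theorem wtFun_eq_card_filter_entryValue (γ : List ℕ) (f : ℕ × ℕ → ℕ) (k : ℕ) :
    wtFun γ f k = #{x ∈ shapeCells γ | entryValue (f x) = k} := by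
  simp only [wtFun, entryValue_eq_iff]

end Weight

section ReadingWord

theorem getElem?_eq_of_mAt_lt_mAt_succ {i : ℕ} {w : List ℕ} {p : ℕ}
    (h : mAt i w p < mAt i w (p + 1)) : w[p]? = some i := by
  simp only [mAt, List.take_add_one] at h
  rcases hp : w[p]? with _ | a
  · simp [hp] at h
  · simp only [hp, Option.toList_some, List.count_append, List.count_singleton] at h
    by_contra hai
    split_ifs at h <;> simp_all

theorem mAt_le_mMax {i : ℕ} {w : List ℕ} {r : ℕ} (h : r < w.length) :
    mAt i w (r + 1) ≤ mMax i w := by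
  set L := (List.range w.length).map (fun r => mAt i w (r + 1)) with hL
  have hm : mAt i w (r + 1) ∈ L := List.mem_map.2 ⟨r, List.mem_range.2 h, rfl⟩
  rcases hmax : L.maximum with _ | m
  · exact (List.not_mem_nil (List.maximum_eq_bot.1 hmax ▸ hm)).elim
  · rw [mMax, ← hL, hmax]
    exact List.le_maximum_of_mem hm hmax

theorem exists_mAt_eq_mMax {i : ℕ} {w : List ℕ} (h : 0 < mMax i w) :
    ∃ r < w.length, mAt i w (r + 1) = mMax i w := by
  set L := (List.range w.length).map (fun r => mAt i w (r + 1)) with hL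
  rcases hmax : L.maximum with _ | m
  · rw [mMax, ← hL, hmax] at h
    exact absurd h (lt_irrefl 0)
  · obtain ⟨r, hr, hrm⟩ := List.mem_map.1 (List.maximum_mem hmax)
    exact ⟨r, List.mem_range.1 hr, by rw [hrm, mMax, ← hL, hmax]; rfl⟩

theorem getElem?_findIdx_mAt_eq_mMax {i : ℕ} {w : List ℕ} (hM : 0 < mMax i w) :
    w[(List.range w.length).findIdx (fun r => decide (mAt i w (r + 1) = mMax i w))]? = some i := by
  set p := (List.range w.length).findIdx (fun r => decide (mAt i w (r + 1) = mMax i w))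
  obtain ⟨r, hr, hrM⟩ := exists_mAt_eq_mMax hM
  have hp : p < (List.range w.length).length :=
    List.findIdx_lt_length_of_exists ⟨r, List.mem_range.2 hr, by simpa using hrM⟩
  have hpM : mAt i w (p + 1) = mMax i w := by
    simpa using List.findIdx_getElem (w := hp)
  have hbefore : mAt i w p < mMax i w := by
    rcases Nat.eq_zero_or_pos p with h0 | hpos
    · simpa [h0, mAt] using hM
    · have hle := mAt_le_mMax (i := i) (show p - 1 < w.length by simp at hp; omega)
      have hne := List.not_of_lt_findIdx (show p - 1 < p by omega)
      simp only [List.getElem_range, decide_eq_false_iff_not] at hne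
      rw [Nat.sub_add_cancel hpos] at hle hne
      exact lt_of_le_of_ne hle hne
  exact getElem?_eq_of_mAt_lt_mAt_succ (hpM ▸ hbefore)

end ReadingWord

section Tableau

variable {n : ℕ} {γ : List ℕ}

theorem getD_le_foldr_max (l : List ℕ) (j : ℕ) : l.getD j 0 ≤ l.foldr max 0 := by
  induction l generalizing j with
  | nil => simp
  | cons a t ih =>
    cases j with
    | zero => simp
    | succ m => simpa using le_trans (ih m) (le_max_right _ _)

theorem mem_shapeCells {rc : ℕ × ℕ} : rc ∈ shapeCells γ ↔ ShiftedShape γ rc := by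
  obtain ⟨r, c⟩ := rc
  have hpart : part γ r ≤ γ.foldr max 0 := getD_le_foldr_max γ (r - 1)
  simp only [shapeCells, Finset.mem_filter, Finset.mem_product, Finset.mem_range,
    and_iff_right_iff_imp]
  rintro ⟨-, h2, -, h4⟩
  simp only [colBound, part] at *
  omega

theorem SSHT.shiftedShape_of_entry_ne_zero (T : SSHT n γ) {rc : ℕ × ℕ} (h : T.entry rc ≠ 0) :
    ShiftedShape γ rc :=
  not_imp_comm.1 (T.zero_outside rc) h

theorem shiftedShape_of_mem_hookCells (T : SSHT n γ) {rc : ℕ × ℕ} (h : rc ∈ hookCells T) :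
    ShiftedShape γ rc := by
  simp only [hookCells, List.mem_flatMap, List.mem_append, List.mem_map, List.mem_filter,
    Bool.and_eq_true, decide_eq_true_eq] at h
  obtain ⟨_, -, ⟨_, ⟨-, hs, -⟩, rfl⟩ | ⟨_, ⟨-, hs, -⟩, rfl⟩⟩ := h <;> exact hs

theorem entry_of_ribbonTarget_eq_some (T : SSHT n γ) {i fuel : ℕ} {rc q : ℕ × ℕ}
    (h : ribbonTarget T i fuel rc = some q) : T.entry q = 2 * i := by
  induction fuel generalizing rc with
  | zero => simp [ribbonTarget] at h
  | succ m ih =>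
    obtain ⟨r, c⟩ := rc
    rw [ribbonTarget] at h
    split_ifs at h with hstop
    · exact Option.some.inj h ▸ hstop.1
    all_goals exact ih h

theorem SSHT.entryValue_hookCells_findIdx (T : SSHT n γ) {i : ℕ} (hM : 0 < mMax i (hookWord T))
    {rc : ℕ × ℕ} (hcell : (hookCells T)[(List.range (hookWord T).length).findIdx
      (fun r => decide (mAt i (hookWord T) (r + 1) = mMax i (hookWord T)))]? = some rc) :
    entryValue (T.entry rc) = i := by
  have hword := getElem?_findIdx_mAt_eq_mMax hM
  generalize List.findIdx _ _ = k at hword hcell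
  simpa [hookWord, hcell] using hword

theorem exists_entryValue_raise_of_shiftedLowerFun {i : ℕ} {T : SSHT n γ} {g : ℕ × ℕ → ℕ}
    (hg : shiftedLowerFun i T = some g) :
    ∃ p ∈ shapeCells γ, entryValue (T.entry p) = i ∧ entryValue (g p) = i + 1 ∧
      ∀ x ∈ shapeCells γ, x ≠ p → entryValue (g x) = entryValue (T.entry x) := by
  simp only [shiftedLowerFun] at hg
  split_ifs at hg with hM
  rcases hcell : (hookCells T)[(List.range (hookWord T).length).findIdx
    (fun r => decide (mAt i (hookWord T) (r + 1) = mMax i (hookWord T)))]? with _ | ⟨r, c⟩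
  · simp [hcell] at hg
  rw [hcell] at hg
  dsimp only at hg
  have hval := T.entryValue_hookCells_findIdx (by omega) hcell
  have hshape := shiftedShape_of_mem_hookCells T (List.mem_of_getElem? hcell)
  have hi : 1 ≤ i := by
    have := T.pos _ hshape
    rw [entryValue] at hval
    omega
  have hmem : (r, c) ∈ shapeCells γ := mem_shapeCells.2 hshape
  split_ifs at hg with hx hz hy hmarked hyi <;> try cases hg
  -- 1(a)
  · exact ⟨(r, c), hmem, hval, by simp, fun x _ hxr => by
      by_cases hxz : x = (r, c + 1) <;> simp [hxr, hxz, hz]⟩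
  -- 1(b)
  · exact ⟨(r, c), hmem, hval, by simp, fun x _ hxr => by simp [hxr]⟩
  -- 1(c), the northwestern cell of the ribbon marked in `T`
  · exact ⟨(r, c), hmem, hval, by simp, fun x _ hxr => by
      simp only [hxr, if_false]; split_ifs with hxq <;> simp [hxq, entryValue_succ_of_odd hmarked]⟩
  -- 1(c), that cell already unmarked
  · exact ⟨(r, c), hmem, hval, by simp, fun x _ hxr => by
      simp only [hxr, if_false]; split_ifs with hxq <;> simp [hxq]⟩
  -- 2(a)
  · refine ⟨(r + 1, c), mem_shapeCells.2 (T.shiftedShape_of_entry_ne_zero (by omega)),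
      by simp [hyi], by simp, fun x _ hxr => ?_⟩
    by_cases hxc : x = (r, c) <;> simp [hxr, hxc, hval]
  -- 2(b)
  · exact ⟨(r, c), hmem, hval, by simp, fun x _ hxr => by simp [hxr]⟩
  -- 2(c)
  · rcases hq : ribbonTarget T i (2 * colBound γ + 2) (r, c) with _ | q
    · simp [hq] at hg
    rw [hq] at hg
    cases hg
    have hqi : T.entry q = 2 * i := entry_of_ribbonTarget_eq_some T hq
    have hqr : q ≠ (r, c) := by rintro rfl; exact hx hqi
    refine ⟨q, mem_shapeCells.2 (T.shiftedShape_of_entry_ne_zero (by omega)), by simp [hqi],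
      by simp [hqr], fun x _ hxq => ?_⟩
    by_cases hxc : x = (r, c) <;> simp [hxq, hxc, hval]

end Tableau

theorem shiftedLower_wt_general (n : ℕ) (γ : List ℕ)
    (i : ℕ) (T : SSHT n γ)
    (g : ℕ × ℕ → ℕ) (hg : shiftedLowerFun i T = some g) :
    wtFun γ g i + 1 = wtFun γ T.entry i ∧
    wtFun γ g (i + 1) = wtFun γ T.entry (i + 1) + 1 ∧
    (∀ k, k ≠ i → k ≠ i + 1 → wtFun γ g k = wtFun γ T.entry k) := by
  obtain ⟨p, hp, hTp, hgp, hoff⟩ := exists_entryValue_raise_of_shiftedLowerFun hg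
  simp only [wtFun_eq_card_filter_entryValue]
  exact card_filter_shift_of_eq_off hp (Nat.ne_add_one i) hTp hgp hoff

/-- For `1 ≤ i < n` and `T ∈ SSHT_n(γ)` with `f_i*(T) ≠ 0`,
the weight of `f_i*(T)` is obtained from the weight of `T` by decreasing the
`i`-th part by `1` and increasing the `(i+1)`-st part by `1`; all other parts
are unchanged. -/
theorem shiftedLower_wt (n : ℕ) (γ : List ℕ) (hγ : StrictPartition γ)
    (i : ℕ) (h1 : 1 ≤ i) (h2 : i < n) (T : SSHT n γ)
    (g : ℕ × ℕ → ℕ) (hg : shiftedLowerFun i T = some g) :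
    wtFun γ g i + 1 = wtFun γ T.entry i ∧
    wtFun γ g (i + 1) = wtFun γ T.entry (i + 1) + 1 ∧
    (∀ k, k ≠ i → k ≠ i + 1 → wtFun γ g k = wtFun γ T.entry k) :=
  shiftedLower_wt_general n γ i T g hg
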